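/- Let S be a countable ℵ₀-categorical semigroup. Then: (1) S has only finitely many characteristic subsets; (2) every characteristic subsemigroup of S is ℵ₀-categorical; (3) there exists n ≥ 1 with S^n = S^{n+1}, and consequently S^n = S^m for all m ≥ n. -/

import Mathlib

/-- Two `n`-tuples of a semigroup are automorphically equivalent if some semigroup
automorphism maps one to the other componentwise. -/
def AutRel (S : Type*) [Semigroup S] {n : ℕ} (a b : Fin n → S) : Prop :=
  ∃ φ : S ≃* S, ∀ k, φ (a k) = b k

/-- A semigroup is ℵ₀-categorical if, for every `n ≥ 1`, the action of its automorphism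
group on `n`-tuples has only finitely many orbits. -/
def Aleph0Categorical (S : Type*) [Semigroup S] : Prop :=
  ∀ n : ℕ, 1 ≤ n → ∃ t : Set (Fin n → S), t.Finite ∧
    ∀ a : Fin n → S, ∃ b ∈ t, AutRel S b a

/-- A subset of a semigroup is characteristic if it is invariant under all automorphisms. -/
def IsCharacteristic (S : Type*) [Semigroup S] (A : Set S) : Prop :=
  ∀ φ : S ≃* S, φ '' A = A

/-- `prodSet S n` is the set `S^(n+1)` of all products of `n+1` elements of `S`
(so `prodSet S 0 = S^1 = S`). -/
def prodSet (S : Type*) [Semigroup S] : ℕ → Set S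
  | 0 => Set.univ
  | n + 1 => {x | ∃ a ∈ prodSet S n, ∃ b : S, x = a * b}

/-! A characteristic set is a union of `Aut(S)`-orbits of elements, so it is determined by which
of the finitely many orbit representatives it contains; the sets `S^n` are characteristic, so the
descending chain `S ⊇ S^2 ⊇ ⋯` takes only finitely many values and must stabilise. An automorphism
of `S` restricts to an automorphism of a characteristic subsemigroup `A`, so orbit representatives
of `n`-tuples of `S` that lie in `A` serve as orbit representatives for `A`. -/

section

variable {S : Type*} [Semigroup S]

namespace IsCharacteristic

variable {A : Set S}

theorem apply_mem_iff (hA : IsCharacteristic S A) (φ : S ≃* S) {x : S} : φ x ∈ A ↔ x ∈ A := by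
  nth_rewrite 1 [← hA φ]
  exact φ.injective.mem_set_image

theorem mem_iff_of_autRel (hA : IsCharacteristic S A) {n : ℕ} {a b : Fin n → S}
    (h : AutRel S a b) (k : Fin n) : a k ∈ A ↔ b k ∈ A := by
  obtain ⟨φ, hφ⟩ := h
  rw [← hφ k, hA.apply_mem_iff]

def restrict {A : Subsemigroup S} (hA : IsCharacteristic S (A : Set S)) (φ : S ≃* S) :
    A ≃* A where
  toFun x := ⟨φ x, (hA.apply_mem_iff φ).2 x.2⟩
  invFun x := ⟨φ.symm x, (hA.apply_mem_iff φ.symm).2 x.2⟩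
  left_inv x := Subtype.ext (φ.symm_apply_apply x)
  right_inv x := Subtype.ext (φ.apply_symm_apply x)
  map_mul' x y := Subtype.ext (φ.map_mul x y)

end IsCharacteristic

namespace Aleph0Categorical

theorem finite_setOf_isCharacteristic (hcat : Aleph0Categorical S) :
    {A : Set S | IsCharacteristic S A}.Finite := by
  obtain ⟨t, ht, hrep⟩ := hcat 1 le_rfl
  let reps : Set S → Set (Fin 1 → S) := fun A => {b ∈ t | b 0 ∈ A}
  refine Set.Finite.of_finite_image (f := reps) (ht.finite_subsets.subset ?_) ?_
  · rintro _ ⟨A, -, rfl⟩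
    exact Set.sep_subset _ _
  · intro A hA B hB hAB
    ext x
    obtain ⟨b, hbt, hb⟩ := hrep fun _ => x
    have hbA : b 0 ∈ A ↔ b 0 ∈ B := by
      simpa [reps, hbt] using Set.ext_iff.1 hAB b
    rw [← hA.mem_iff_of_autRel hb 0, hbA, hB.mem_iff_of_autRel hb 0]

theorem subsemigroup (hcat : Aleph0Categorical S) {A : Subsemigroup S}
    (hA : IsCharacteristic S (A : Set S)) : Aleph0Categorical A := by
  intro n hn
  obtain ⟨t, ht, hrep⟩ := hcat n hn
  have hval : Function.Injective fun (b : Fin n → A) k => (b k : S) :=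
    fun _ _ h => funext fun k => Subtype.ext (congrFun h k)
  refine ⟨_, ht.preimage hval.injOn, fun a => ?_⟩
  obtain ⟨b, hbt, hb⟩ := hrep fun k => (a k : S)
  have hbA (k : Fin n) : b k ∈ A := (hA.mem_iff_of_autRel hb k).2 (a k).2
  obtain ⟨φ, hφ⟩ := hb
  exact ⟨fun k => ⟨b k, hbA k⟩, hbt, hA.restrict φ, fun k => Subtype.ext (hφ k)⟩

end Aleph0Categorical

theorem isCharacteristic_prodSet (n : ℕ) : IsCharacteristic S (prodSet S n) := by
  induction n with
  | zero => intro φ; simp [prodSet, φ.surjective.range_eq]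
  | succ n ih =>
    intro φ
    ext x
    constructor
    · rintro ⟨y, ⟨a, ha, b, rfl⟩, rfl⟩
      exact ⟨φ a, (ih.apply_mem_iff φ).2 ha, φ b, map_mul φ a b⟩
    · rintro ⟨a, ha, b, rfl⟩
      refine ⟨φ.symm a * φ.symm b, ⟨φ.symm a, (ih.apply_mem_iff φ.symm).2 ha, φ.symm b, rfl⟩, ?_⟩
      simp

theorem prodSet_antitone : Antitone (prodSet S) := by
  refine antitone_nat_of_succ_le fun n => ?_
  induction n with
  | zero => exact Set.subset_univ _
  | succ n ih => rintro x ⟨a, ha, b, rfl⟩; exact ⟨a, ih ha, b, rfl⟩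

theorem prodSet_eq_of_succ_eq {n : ℕ} (h : prodSet S n = prodSet S (n + 1)) {m : ℕ}
    (hm : n ≤ m) : prodSet S m = prodSet S n := by
  induction m, hm using Nat.le_induction with
  | base => rfl
  | succ m _ ih =>
    change {x | ∃ a ∈ prodSet S m, ∃ b : S, x = a * b} = prodSet S n
    rw [ih]
    exact h.symm

theorem Aleph0Categorical.exists_prodSet_eq_succ (hcat : Aleph0Categorical S) :
    ∃ n, prodSet S n = prodSet S (n + 1) := by
  obtain ⟨i, j, hij, heq⟩ := hcat.finite_setOf_isCharacteristic.exists_lt_map_eq_of_forall_mem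
    (f := prodSet S) isCharacteristic_prodSet
  refine ⟨i, le_antisymm ?_ (prodSet_antitone i.le_succ)⟩
  rw [heq]
  exact prodSet_antitone hij

end

theorem aleph0Categorical_characteristic (S : Type*) [Semigroup S]
    (hcat : Aleph0Categorical S) :
    {A : Set S | IsCharacteristic S A}.Finite ∧
    (∀ A : Subsemigroup S, IsCharacteristic S (A : Set S) → Aleph0Categorical A) ∧
    (∃ n : ℕ, prodSet S n = prodSet S (n + 1) ∧ ∀ m : ℕ, n ≤ m → prodSet S m = prodSet S n) := by
  obtain ⟨n, hn⟩ := hcat.exists_prodSet_eq_succ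
  exact ⟨hcat.finite_setOf_isCharacteristic, fun _ hA => hcat.subsemigroup hA,
    n, hn, fun _ hm => prodSet_eq_of_succ_eq hn hm⟩
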